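/- arXiv:2604.17447 — 8 statements merged into one kernel-verified Lean document; each statement's English description precedes it below -/
import Mathlib

section
/- Let G be a group acting on the right on a set P (freely, as the structure group of a discrete principal bundle), and let f : P → G satisfy f(p · g) = g⁻¹ * f(p) * g for all p ∈ P, g ∈ G. Then the operation p₁ ◁ p₂ := p₁ · (f(p₁)⁻¹ * f(p₂)) satisfies (p₁ ◁ p₂) ◁ p₃ = (p₁ ◁ p₃) ◁ (p₂ ◁ p₃) for all p₁, p₂, p₃ ∈ P. -/
theorem gauge_quandle_self_distrib {P G : Type*} [Group G]
    (act : P → G → P)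
    (act_one : ∀ p, act p 1 = p)
    (act_mul : ∀ p g h, act (act p g) h = act p (g * h))
    (hfree : ∀ p g g', act p g = act p g' → g = g')
    (f : P → G)
    (hf : ∀ p g, f (act p g) = g⁻¹ * f p * g)
    (op : P → P → P) (hop : ∀ p₁ p₂, op p₁ p₂ = act p₁ ((f p₁)⁻¹ * f p₂)) :
    ∀ p₁ p₂ p₃ : P, op (op p₁ p₂) p₃ = op (op p₁ p₃) (op p₂ p₃) := by
  intro p₁ p₂ p₃
  simp only [hop, hf, act_mul]
  congr 1
  group
end

section
/- Let P be a set with a free right action of a group G and f : P → G with f(p·g) = g⁻¹ f(p) g. For fixed p₂ ∈ P, the map p ↦ p ◁ p₂ := p · (f(p)⁻¹ f(p₂)) is a bijection of P. -/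
theorem gauge_quandle_right_bijective {P G : Type*} [Group G]
    (act : P → G → P)
    (act_one : ∀ p, act p 1 = p)
    (act_mul : ∀ p g h, act (act p g) h = act p (g * h))
    (hfree : ∀ p g g', act p g = act p g' → g = g')
    (f : P → G)
    (hf : ∀ p g, f (act p g) = g⁻¹ * f p * g) :
    ∀ p₂ : P, Function.Bijective (fun p : P => act p ((f p)⁻¹ * f p₂)) := by
  intro p₂
  apply Function.bijective_iff_has_inverse.mpr
  refine ⟨fun q => act q (f q * (f p₂)⁻¹), ?_, ?_⟩
  · intro p
    simp only [act_mul, hf]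
    rw [show ((f p)⁻¹ * f p₂) * (((f p)⁻¹ * f p₂)⁻¹ * f p * ((f p)⁻¹ * f p₂) * (f p₂)⁻¹) = 1 by group, act_one]
  · intro q
    simp only [act_mul, hf]
    rw [show (f q * (f p₂)⁻¹) * (((f q * (f p₂)⁻¹)⁻¹ * f q * (f q * (f p₂)⁻¹))⁻¹ * f p₂) = 1 by group, act_one]
end

section
/- Let G be a group, viewed as a discrete principal bundle over a point with G acting on itself by right multiplication. Let f : G → G satisfy f(gh) = h⁻¹ f(g) h for all g, h ∈ G. Then f(g) = g⁻¹ f(e) g for all g, and the gauge quandle operation g₁ ◁ g₂ = g₁ * f(g₁)⁻¹ * f(g₂) equals the generalized Alexander quandle operation σ(g₁ g₂⁻¹) g₂, where σ is conjugation by f(e). -/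
theorem gauge_quandle_over_point {G : Type*} [Group G]
    (f : G → G)
    (hf : ∀ g h, f (g * h) = h⁻¹ * f g * h) :
    (∀ g : G, f g = g⁻¹ * f 1 * g) ∧
    (∀ g₁ g₂ : G,
      g₁ * ((f g₁)⁻¹ * f g₂) = ((f 1)⁻¹ * (g₁ * g₂⁻¹) * f 1) * g₂) := by
  have h : ∀ g : G, f g = g⁻¹ * f 1 * g := by
    intro g
    have := hf 1 g
    simpa using this
  refine ⟨h, fun g₁ g₂ => ?_⟩
  rw [h g₁, h g₂]
  group
end

section
/- Let P carry a right G-action and f : P → G satisfy f(p·g) = g⁻¹ f(p) g. Let H ≤ G be a subgroup such that f(p) lies in the normalizer of H for every p ∈ P. Then the gauge quandle operation descends to the quotient P/H of the restricted H-action: if p₁' ∈ p₁·H and p₂' ∈ p₂·H, then p₁' ◁ p₂' ∈ (p₁ ◁ p₂)·H, where p₁ ◁ p₂ = p₁ · (f(p₁)⁻¹ f(p₂)). -/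
theorem gauge_quandle_descends_to_quotient {P G : Type*} [Group G]
    (act : P → G → P)
    (act_one : ∀ p, act p 1 = p)
    (act_mul : ∀ p g h, act (act p g) h = act p (g * h))
    (f : P → G)
    (hf : ∀ p g, f (act p g) = g⁻¹ * f p * g)
    (H : Subgroup G)
    (hnorm : ∀ p, f p ∈ Subgroup.normalizer (H : Set G)) :
    ∀ (p₁ p₂ : P) (h₁ h₂ : G), h₁ ∈ H → h₂ ∈ H →
      ∃ h ∈ H,
        act (act p₁ h₁) ((f (act p₁ h₁))⁻¹ * f (act p₂ h₂)) =
          act (act p₁ ((f p₁)⁻¹ * f p₂)) h := by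
  intro p₁ p₂ h₁ h₂ hh₁ hh₂
  refine ⟨(f p₂)⁻¹ * (h₁ * h₂⁻¹) * f p₂ * h₂, ?_, ?_⟩
  · have hn : (f p₂)⁻¹ ∈ Subgroup.normalizer (H : Set G) := inv_mem (hnorm p₂)
    have := (Subgroup.mem_normalizer_iff.mp hn (h₁ * h₂⁻¹)).mp
      (H.mul_mem hh₁ (H.inv_mem hh₂))
    have : (f p₂)⁻¹ * (h₁ * h₂⁻¹) * f p₂ ∈ H := by simpa using this
    exact H.mul_mem this hh₂
  · rw [act_mul, act_mul, hf, hf]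
    congr 1
    group
end

section
/- Let G be a group, f : G → G with f(gh) = h⁻¹ f(g) h, and H a subgroup of G such that f(e) commutes with every element of H. Then the operation [g₁] ◁ [g₂] := [σ(g₁ g₂⁻¹) g₂] on the left coset space H\G is well defined and makes H\G a quandle, where σ is conjugation by f(e). -/
/-- The setoid of right cosets `Hg` of a subgroup `H` in `G`. -/
def rightCosetSetoid {G : Type*} [Group G] (H : Subgroup G) : Setoid G :=
  ⟨fun a b => ∃ h ∈ H, b = h * a, by
    constructor
    · intro a; exact ⟨1, H.one_mem, by group⟩
    · rintro a b ⟨h, hh, rfl⟩; exact ⟨h⁻¹, H.inv_mem hh, by group⟩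
    · rintro a b c ⟨h, hh, rfl⟩ ⟨k, hk, rfl⟩
      exact ⟨k * h, H.mul_mem hk hh, by group⟩⟩

theorem homogeneous_quandle_on_cosets {G : Type*} [Group G]
    (f : G → G)
    (hf : ∀ g h, f (g * h) = h⁻¹ * f g * h)
    (H : Subgroup G)
    (hcomm : ∀ h ∈ H, f 1 * h = h * f 1) :
    ∃ op : Quotient (rightCosetSetoid H) → Quotient (rightCosetSetoid H) →
        Quotient (rightCosetSetoid H),
      (∀ g₁ g₂ : G,
        op (Quotient.mk (rightCosetSetoid H) g₁) (Quotient.mk (rightCosetSetoid H) g₂) =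
          Quotient.mk (rightCosetSetoid H) ((f 1)⁻¹ * (g₁ * g₂⁻¹) * f 1 * g₂)) ∧
      (∀ x, op x x = x) ∧
      (∀ x y z, op (op x y) z = op (op x z) (op y z)) ∧
      (∀ y, Function.Bijective (fun x => op x y)) := by
  set c := f 1 with hc
  have e1 : ∀ h ∈ H, c⁻¹ * h = h * c⁻¹ := by
    intro h hh
    have := hcomm h hh
    calc c⁻¹ * h = c⁻¹ * h * c * c⁻¹ := by group
    _ = c⁻¹ * (c * h) * c⁻¹ := by rw [mul_assoc c⁻¹ h c, show c * h = h * c from this]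
    _ = h * c⁻¹ := by group
  have e2 : ∀ h ∈ H, h⁻¹ * c * h = c := by
    intro h hh
    rw [mul_assoc, hcomm h hh]; group
  have e2' : ∀ h ∈ H, h⁻¹ * c⁻¹ * h = c⁻¹ := by
    intro h hh
    have := e1 h hh
    rw [mul_assoc]
    calc h⁻¹ * (c⁻¹ * h) = h⁻¹ * (h * c⁻¹) := by rw [this]
    _ = c⁻¹ := by group
  have hwd : ∀ (a₁ b₁ : G), (rightCosetSetoid H).r a₁ b₁ → ∀ (a₂ b₂ : G),
      (rightCosetSetoid H).r a₂ b₂ →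
      (rightCosetSetoid H).r (c⁻¹ * (a₁ * a₂⁻¹) * c * a₂) (c⁻¹ * (b₁ * b₂⁻¹) * c * b₂) := by
    rintro a₁ _ ⟨h₁, hh₁, rfl⟩ a₂ _ ⟨h₂, hh₂, rfl⟩
    refine ⟨h₁, hh₁, ?_⟩
    rw [show c⁻¹ * (h₁ * a₁ * (h₂ * a₂)⁻¹) * c * (h₂ * a₂)
        = (c⁻¹ * h₁) * (a₁ * a₂⁻¹) * (h₂⁻¹ * c * h₂) * a₂ from by group,
      e1 h₁ hh₁, e2 h₂ hh₂]
    group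
  have hwd' : ∀ (a₁ b₁ : G), (rightCosetSetoid H).r a₁ b₁ → ∀ (a₂ b₂ : G),
      (rightCosetSetoid H).r a₂ b₂ →
      (rightCosetSetoid H).r (c * (a₁ * a₂⁻¹) * c⁻¹ * a₂) (c * (b₁ * b₂⁻¹) * c⁻¹ * b₂) := by
    rintro a₁ _ ⟨h₁, hh₁, rfl⟩ a₂ _ ⟨h₂, hh₂, rfl⟩
    refine ⟨h₁, hh₁, ?_⟩
    rw [show c * (h₁ * a₁ * (h₂ * a₂)⁻¹) * c⁻¹ * (h₂ * a₂)
        = (c * h₁) * (a₁ * a₂⁻¹) * (h₂⁻¹ * c⁻¹ * h₂) * a₂ from by group,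
      hcomm h₁ hh₁, e2' h₂ hh₂]
    group
  refine ⟨Quotient.map₂ (fun a b => c⁻¹ * (a * b⁻¹) * c * b) hwd, ?_, ?_, ?_, ?_⟩
  · intro g₁ g₂; rfl
  · intro x
    induction x using Quotient.ind with
    | _ a => exact congrArg (Quotient.mk _) (by group)
  · intro x y z
    induction x using Quotient.ind with
    | _ a =>
      induction y using Quotient.ind with
      | _ b =>
        induction z using Quotient.ind with
        | _ d => exact congrArg (Quotient.mk _) (by group)
  · intro y
    rw [Function.bijective_iff_has_inverse]
    refine ⟨fun x => Quotient.map₂ (fun a b => c * (a * b⁻¹) * c⁻¹ * b) hwd' x y, ?_, ?_⟩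
    · intro x
      induction x using Quotient.ind with
      | _ a =>
        induction y using Quotient.ind with
        | _ b => exact congrArg (Quotient.mk _) (by group)
    · intro x
      induction x using Quotient.ind with
      | _ a =>
        induction y using Quotient.ind with
        | _ b => exact congrArg (Quotient.mk _) (by group)
end

section
/- Let G be a Lie group (or just a group) acting on the right on a set P, and X : P → g a map into the Lie algebra such that exp(tX(p·g)) = g⁻¹ exp(tX(p)) g for all t ∈ ℝ, p ∈ P, g ∈ G. Define p₁ ◁ₜ p₂ := p₁ · (exp(−t X(p₁)) exp(t X(p₂))). Then the self-action law holds: (p₁ ◁ₜ p₂) ◁ₛ p₂ = p₁ ◁ₛ₊ₜ p₂ for all s, t ∈ ℝ and p₁, p₂ ∈ P. -/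
theorem parametrized_gauge_self_action {P G : Type*} [Group G]
    (act : P → G → P)
    (act_one : ∀ p, act p 1 = p)
    (act_mul : ∀ p g h, act (act p g) h = act p (g * h))
    (E : P → ℝ → G)
    (hE_add : ∀ p s t, E p s * E p t = E p (s + t))
    (hE_equiv : ∀ p g t, E (act p g) t = g⁻¹ * E p t * g)
    (op : ℝ → P → P → P)
    (hop : ∀ t p₁ p₂, op t p₁ p₂ = act p₁ ((E p₁ t)⁻¹ * E p₂ t)) :
    ∀ (s t : ℝ) (p₁ p₂ : P), op s (op t p₁ p₂) p₂ = op (s + t) p₁ p₂ := by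
  intro s t p₁ p₂
  simp only [hop, hE_equiv, act_mul]
  congr 1
  calc (E p₁ t)⁻¹ * E p₂ t *
        ((((E p₁ t)⁻¹ * E p₂ t)⁻¹ * E p₁ s * ((E p₁ t)⁻¹ * E p₂ t))⁻¹ *
        E p₂ s)
      = (E p₁ t * E p₁ s)⁻¹ * (E p₂ t * E p₂ s) := by group
    _ = (E p₁ (s + t))⁻¹ * E p₂ (s + t) := by
        rw [hE_add, hE_add, add_comm t s]
end

section
/- With the parametrized gauge quandle operation p₁ ◁ₜ p₂ := p₁ · (exp(−tX(p₁)) exp(tX(p₂))) as above, the parametrized self-distributivity law holds: (p₁ ◁ₜ p₂) ◁ₛ p₃ = (p₁ ◁ₛ p₃) ◁ₜ (p₂ ◁ₛ p₃) for all s, t ∈ ℝ and p₁, p₂, p₃ ∈ P, and the idempotency p ◁ₛ p = p holds for all p and s. -/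
theorem parametrized_gauge_self_distrib_idem {P G : Type*} [Group G]
    (act : P → G → P)
    (act_one : ∀ p, act p 1 = p)
    (act_mul : ∀ p g h, act (act p g) h = act p (g * h))
    (E : P → ℝ → G)
    (hE_add : ∀ p s t, E p s * E p t = E p (s + t))
    (hE_equiv : ∀ p g t, E (act p g) t = g⁻¹ * E p t * g)
    (op : ℝ → P → P → P)
    (hop : ∀ t p₁ p₂, op t p₁ p₂ = act p₁ ((E p₁ t)⁻¹ * E p₂ t)) :
    (∀ (s t : ℝ) (p₁ p₂ p₃ : P),
      op s (op t p₁ p₂) p₃ = op t (op s p₁ p₃) (op s p₂ p₃)) ∧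
    (∀ (s : ℝ) (p : P), op s p p = p) := by
  have comm : ∀ (p : P) (s t : ℝ), E p s * E p t = E p t * E p s := by
    intro p s t; rw [hE_add, hE_add, add_comm]
  constructor
  · intro s t p₁ p₂ p₃
    simp only [hop, hE_equiv, act_mul]
    congr 1
    simp only [mul_inv_rev, inv_inv, mul_assoc, inv_mul_cancel_left, mul_inv_cancel_left]
    rw [← mul_assoc (E p₂ s), comm p₂ s t, mul_assoc (E p₂ t), mul_inv_cancel_left, ← mul_assoc, ← mul_assoc, ← mul_inv_rev, comm p₁ t s, mul_inv_rev, mul_assoc, mul_assoc]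
  · intro s p
    rw [hop, inv_mul_cancel, act_one]
end

section
/- The parametrized gauge quandle is a Noether quandle: with p₁ ◁ₜ p₂ := p₁ · (exp(−tX(p₁)) exp(tX(p₂))) on a set P with a free right G-action, one has p₁ ◁ₜ p₂ = p₁ for all t ∈ ℝ if and only if p₂ ◁ₜ p₁ = p₂ for all t ∈ ℝ; both are equivalent to exp(tX(p₁)) = exp(tX(p₂)) for all t ∈ ℝ. -/
theorem parametrized_gauge_noether {P G : Type*} [Group G]
    (act : P → G → P)
    (act_one : ∀ p, act p 1 = p)
    (act_mul : ∀ p g h, act (act p g) h = act p (g * h))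
    (hfree : ∀ p g g', act p g = act p g' → g = g')
    (E : P → ℝ → G)
    (hE_add : ∀ p s t, E p s * E p t = E p (s + t))
    (hE_equiv : ∀ p g t, E (act p g) t = g⁻¹ * E p t * g)
    (op : ℝ → P → P → P)
    (hop : ∀ t p₁ p₂, op t p₁ p₂ = act p₁ ((E p₁ t)⁻¹ * E p₂ t)) :
    ∀ p₁ p₂ : P,
      ((∀ t : ℝ, op t p₁ p₂ = p₁) ↔ (∀ t : ℝ, op t p₂ p₁ = p₂)) ∧
      ((∀ t : ℝ, op t p₁ p₂ = p₁) ↔ (∀ t : ℝ, E p₁ t = E p₂ t)) := by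
  intro p₁ p₂
  have key : ∀ a b : P, (∀ t : ℝ, op t a b = a) ↔ (∀ t : ℝ, E a t = E b t) := by
    intro a b
    constructor
    · intro h t
      have := h t
      rw [hop] at this
      have := hfree a _ _ (this.trans (act_one a).symm)
      exact (inv_mul_eq_one.mp this)
    · intro h t
      rw [hop, ← h t, inv_mul_cancel, act_one]
  constructor
  · rw [key, key]
    constructor <;> intro h t <;> exact (h t).symm
  · exact key p₁ p₂
end
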